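/- arXiv:2507.15071 — 2 statements merged into one kernel-verified Lean document; each statement's English description precedes it below -/
import Mathlib

section
/- If a connected graph G admits a local multiset resolving set, then every clique K of G contains at most two K-end vertices. -/
/-!
Two vertices `u, v` with the same neighbours outside `{u, v}` are at the same distance from
every third vertex, so the transposition of `u` and `v` carries the distances from `u` to those
from `v`. Hence `u` and `v` have equal representation multisets with respect to any `W` that
contains both or neither of them. Distinct `K`-end vertices are adjacent and have exactly the
rest of `K` as further neighbours, so they are such twins; among three of them two lie on the
same side of `W`, which contradicts `W` being locally multiset resolving.
-/

open SimpleGraph Finset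

/-- The representation multiset of `u` with respect to `W`: the multiset of distances
from `u` to the vertices of `W`. -/
noncomputable def mrep {V : Type*} (G : SimpleGraph V) (u : V) (W : Finset V) : Multiset ℕ :=
  W.val.map fun w => G.dist u w

/-- `W` is a local multiset resolving set: adjacent vertices have distinct
representation multisets. -/
def IsLocalMultisetResolving {V : Type*} (G : SimpleGraph V) (W : Finset V) : Prop :=
  ∀ u v : V, G.Adj u v → mrep G u W ≠ mrep G v W

namespace SimpleGraph

variable {V : Type*} {G : SimpleGraph V}

theorem dist_le_dist_of_forall_adj {u v y : V} (huy : G.Reachable u y) (hyu : y ≠ u)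
    (h : ∀ x, G.Adj u x → x ≠ v → G.Adj v x) : G.dist v y ≤ G.dist u y := by
  obtain ⟨p, hp⟩ := huy.exists_walk_length_eq_dist
  cases p with
  | nil => exact absurd rfl hyu
  | @cons _ x _ hux q =>
    rw [← hp, Walk.length_cons]
    by_cases hxv : x = v
    · subst hxv
      exact (G.dist_le q).trans (Nat.le_succ _)
    · exact G.dist_le (Walk.cons (h x hux hxv) q)

theorem dist_eq_dist_of_forall_adj_iff (hconn : G.Connected) {u v y : V}
    (h : ∀ x, x ≠ u → x ≠ v → (G.Adj u x ↔ G.Adj v x)) (hyu : y ≠ u) (hyv : y ≠ v) :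
    G.dist u y = G.dist v y :=
  le_antisymm
    (dist_le_dist_of_forall_adj (hconn v y) hyv fun x hvx hxu =>
      (h x hxu (G.ne_of_adj hvx).symm).mpr hvx)
    (dist_le_dist_of_forall_adj (hconn u y) hyu fun x hux hxv =>
      (h x (G.ne_of_adj hux).symm hxv).mp hux)

theorem dist_swap_eq_of_forall_adj_iff [DecidableEq V] (hconn : G.Connected) {u v : V}
    (h : ∀ x, x ≠ u → x ≠ v → (G.Adj u x ↔ G.Adj v x)) (w : V) :
    G.dist u (Equiv.swap u v w) = G.dist v w := by
  rcases eq_or_ne w u with rfl | hwu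
  · rw [Equiv.swap_apply_left, dist_comm]
  rcases eq_or_ne w v with rfl | hwv
  · rw [Equiv.swap_apply_right, dist_self, dist_self]
  rw [Equiv.swap_apply_of_ne_of_ne hwu hwv]
  exact dist_eq_dist_of_forall_adj_iff hconn h hwu hwv

theorem neighborFinset_eq_erase_of_isClique [Fintype V] [DecidableEq V] [DecidableRel G.Adj]
    {K : Finset V} (hK : G.IsClique (K : Set V)) {x : V} (hx : x ∈ K)
    (hdeg : G.degree x = #K - 1) : G.neighborFinset x = K.erase x := by
  refine (eq_of_subset_of_card_le (fun y hy => ?_) ?_).symm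
  · rw [mem_erase] at hy
    exact (G.mem_neighborFinset x y).mpr (hK hx hy.2 hy.1.symm)
  · rw [card_neighborFinset_eq_degree, hdeg, card_erase_of_mem hx]

end SimpleGraph

theorem Finset.map_swap_eq_self {α : Type*} [DecidableEq α] {s : Finset α} {a b : α}
    (h : a ∈ s ↔ b ∈ s) : s.map (Equiv.swap a b).toEmbedding = s :=
  coe_injective <| by
    rw [coe_map]
    exact (Equiv.swap_bijOn_self (by simpa using h)).image_eq

theorem mrep_eq_of_forall_adj_iff {V : Type*} [DecidableEq V] {G : SimpleGraph V}
    (hconn : G.Connected) {u v : V} (h : ∀ x, x ≠ u → x ≠ v → (G.Adj u x ↔ G.Adj v x))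
    {W : Finset V} (hW : u ∈ W ↔ v ∈ W) : mrep G u W = mrep G v W := by
  unfold mrep
  conv_lhs => rw [← Finset.map_swap_eq_self hW, Finset.map_val, Multiset.map_map]
  exact Multiset.map_congr rfl fun w _ => dist_swap_eq_of_forall_adj_iff hconn h w

theorem Finset.exists_ne_mem_iff_mem_of_two_lt_card {α : Type*} {s W : Finset α} (hs : 2 < #s) :
    ∃ x ∈ s, ∃ y ∈ s, x ≠ y ∧ (x ∈ W ↔ y ∈ W) := by
  obtain ⟨x, hx, y, hy, hxy, hW⟩ := exists_ne_map_eq_of_card_lt_of_maps_to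
    (t := (univ : Finset Prop)) (f := (· ∈ W)) (by simpa using hs) fun _ _ => mem_univ _
  exact ⟨x, hx, y, hy, hxy, hW.to_iff⟩

theorem stmt_5_general {V : Type*} [Fintype V] [DecidableEq V] (G : SimpleGraph V)
    [DecidableRel G.Adj] (hconn : G.Connected)
    (hres : ∃ W : Finset V, IsLocalMultisetResolving G W)
    (K : Finset V) (hK : G.IsClique ↑K) :
    (K.filter fun u => G.degree u = K.card - 1).card ≤ 2 := by
  obtain ⟨W, hW⟩ := hres
  by_contra! hcard
  obtain ⟨x, hx, y, hy, hxy, hxyW⟩ := exists_ne_mem_iff_mem_of_two_lt_card (W := W) hcard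
  rw [mem_filter] at hx hy
  have hNx := neighborFinset_eq_erase_of_isClique hK hx.1 hx.2
  have hNy := neighborFinset_eq_erase_of_isClique hK hy.1 hy.2
  have htwin : ∀ z, z ≠ x → z ≠ y → (G.Adj x z ↔ G.Adj y z) := fun z hzx hzy => by
    rw [← mem_neighborFinset, ← mem_neighborFinset, hNx, hNy, mem_erase, mem_erase]
    tauto
  exact hW x y (hK hx.1 hy.1 hxy) (mrep_eq_of_forall_adj_iff hconn htwin hxyW)

/-- If a connected graph `G` admits a local multiset resolving set, then every clique `K`
of `G` (of order at least 3) contains at most two `K`-end vertices, where a `K`-end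
vertex is a vertex of `K` whose degree in `G` equals `|K| - 1`. -/
theorem stmt_5 {V : Type*} [Fintype V] [DecidableEq V] (G : SimpleGraph V)
    [DecidableRel G.Adj] (hconn : G.Connected)
    (hres : ∃ W : Finset V, IsLocalMultisetResolving G W)
    (K : Finset V) (hK : G.IsClique ↑K) (hK3 : 3 ≤ K.card) :
    (K.filter fun u => G.degree u = K.card - 1).card ≤ 2 :=
  stmt_5_general G hconn hres K hK
end

section
/- A connected graph G has local outer multiset dimension 1 if and only if G is bipartite. -/
open SimpleGraph Finset

/-- `W` is a local outer multiset resolving set: adjacent vertices outside `W`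
have distinct representation multisets. -/
def IsLocalOuterMultisetResolving {V : Type*} (G : SimpleGraph V) (W : Finset V) : Prop :=
  ∀ u v : V, u ∉ W → v ∉ W → G.Adj u v → mrep G u W ≠ mrep G v W

/-!
With one landmark `w` the representation of `u` is just `dist u w`, and along an edge this
distance changes by at most one. So `{w}` resolves exactly when it changes by exactly one along
every edge, i.e. when the parity of `dist · w` is a proper 2-colouring. Conversely, in a connected
bipartite graph the parity of `dist u w` records whether `u` and `w` have the same colour, so any
single vertex resolves. The empty set never resolves once there is an edge.
-/

lemma Nat.sInf_eq_one_iff_of_zero_notMem {s : Set ℕ} (h0 : 0 ∉ s) : sInf s = 1 ↔ 1 ∈ s := by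
  constructor
  · intro h
    have hne : s.Nonempty := Nat.nonempty_of_pos_sInf (h ▸ one_pos)
    exact h ▸ Nat.sInf_mem hne
  · intro h1
    refine le_antisymm (Nat.sInf_le h1) (Nat.one_le_iff_ne_zero.mpr fun h => ?_)
    rcases Nat.sInf_eq_zero.mp h with h | h
    · exact h0 h
    · simp [h] at h1

namespace SimpleGraph

variable {V : Type*} {G : SimpleGraph V}

lemma colorable_two_of_forall_adj_dist_ne (w : V)
    (h : ∀ u v, G.Adj u v → G.dist u w ≠ G.dist v w) : G.Colorable 2 := by
  let c : G.Coloring Bool := Coloring.mk (fun v => decide (Even (G.dist v w))) fun {u v} huv => by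
    have hstep : G.dist u w = G.dist v w + 1 ∨ G.dist v w = G.dist u w + 1 := by
      have hdiff := huv.symm.diff_dist_adj (u := w)
      rw [dist_comm (u := w), dist_comm (u := w)] at hdiff
      have hne := h u v huv
      omega
    rcases hstep with hstep | hstep <;>
      simp only [hstep, Nat.even_add_one, ne_eq, decide_eq_decide] <;> tauto
  simpa using c.colorable

lemma Colorable.dist_ne_of_adj (hcol : G.Colorable 2) {u v w : V} (hreach : G.Reachable u w)
    (huv : G.Adj u v) : G.dist u w ≠ G.dist v w := by
  obtain ⟨c⟩ := hcol
  let c' : G.Coloring Bool := G.recolorOfEquiv finTwoEquiv c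
  obtain ⟨p, hp⟩ := hreach.exists_walk_length_eq_dist
  obtain ⟨q, hq⟩ := (huv.symm.reachable.trans hreach).exists_walk_length_eq_dist
  have hpc := c'.even_length_iff_congr p
  have hqc := c'.even_length_iff_congr q
  intro h
  rw [hp, h, ← hq, hqc] at hpc
  exact c'.valid huv (Bool.eq_iff_iff.mpr (by tauto))

end SimpleGraph

section Resolving

variable {V : Type*} {G : SimpleGraph V}

lemma not_isLocalOuterMultisetResolving_empty {a b : V} (hab : G.Adj a b) :
    ¬IsLocalOuterMultisetResolving G ∅ :=
  fun h => h a b (notMem_empty a) (notMem_empty b) hab rfl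

lemma isLocalOuterMultisetResolving_singleton_iff (w : V) :
    IsLocalOuterMultisetResolving G {w} ↔ ∀ u v, G.Adj u v → G.dist u w ≠ G.dist v w := by
  simp only [IsLocalOuterMultisetResolving, mrep, singleton_val, Multiset.map_singleton, ne_eq,
    Multiset.singleton_inj, mem_singleton]
  refine ⟨fun h u v huv => ?_, fun h u v _ _ huv => h u v huv⟩
  by_cases hu : u = w
  · subst hu
    simp [dist_eq_one_iff_adj.mpr huv.symm]
  by_cases hv : v = w
  · subst hv
    simp [dist_eq_one_iff_adj.mpr huv]
  exact h u v hu hv huv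

end Resolving

theorem stmt_9_general {V : Type*} (G : SimpleGraph V)
    (hconn : G.Connected) (hedge : ∃ u v : V, G.Adj u v) :
    sInf {k : ℕ | ∃ W : Finset V, IsLocalOuterMultisetResolving G W ∧ W.card = k} = 1 ↔
      G.Colorable 2 := by
  obtain ⟨a, b, hab⟩ := hedge
  have h0 : 0 ∉ {k : ℕ | ∃ W : Finset V, IsLocalOuterMultisetResolving G W ∧ W.card = k} := by
    rintro ⟨W, hW, hcard⟩
    rw [card_eq_zero] at hcard
    exact not_isLocalOuterMultisetResolving_empty hab (hcard ▸ hW)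
  rw [Nat.sInf_eq_one_iff_of_zero_notMem h0]
  constructor
  · rintro ⟨W, hW, hcard⟩
    obtain ⟨w, rfl⟩ := card_eq_one.mp hcard
    exact colorable_two_of_forall_adj_dist_ne w
      ((isLocalOuterMultisetResolving_singleton_iff w).mp hW)
  · intro hcol
    exact ⟨{a}, (isLocalOuterMultisetResolving_singleton_iff a).mpr fun u v huv =>
      hcol.dist_ne_of_adj (hconn u a) huv, card_singleton a⟩

/-- A connected graph `G` (with at least one edge) has local outer multiset dimension 1
if and only if `G` is bipartite. -/
theorem stmt_9 {V : Type*} [Fintype V] (G : SimpleGraph V)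
    (hconn : G.Connected) (hedge : ∃ u v : V, G.Adj u v) :
    sInf {k : ℕ | ∃ W : Finset V, IsLocalOuterMultisetResolving G W ∧ W.card = k} = 1 ↔
      G.Colorable 2 :=
  stmt_9_general G hconn hedge
end
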